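/- The set GL(n,ℝ) × L₂(n) endowed with the operation (a,f)(a',f') = (a·a', f(a', I) + a ∘ f'(I, a⁻¹)) is a group, where f(a',I)(u,v) = f(a'(u), v) and (a ∘ f'(I,a⁻¹))(u,v) = a(f'(u, a⁻¹(v))). -/

import Mathlib

abbrev V (n : ℕ) : Type := Fin n → ℝ

/-- Bilinear maps `ℝ^n × ℝ^n → ℝ^n`. -/
abbrev L2 (n : ℕ) := V n →ₗ[ℝ] V n →ₗ[ℝ] V n

/-- `GL(n,ℝ)`, realized as the invertible linear endomorphisms of `ℝ^n`. -/
abbrev GLn (n : ℕ) := (V n →ₗ[ℝ] V n)ˣ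

/-- The multiplication `(a,f)(a',f') = (a·a', f(a',I) + a ∘ f'(I,a⁻¹))` of `T¹ₙL¹ₙ`,
where `f(a',I)(u,v) = f(a'(u), v)` and `(a ∘ f'(I,a⁻¹))(u,v) = a(f'(u, a⁻¹(v)))`. -/
noncomputable def tmul {n : ℕ} (p q : GLn n × L2 n) : GLn n × L2 n :=
  (p.1 * q.1,
    p.2.compl₁₂ (q.1 : V n →ₗ[ℝ] V n) LinearMap.id +
      (q.2.compl₁₂ LinearMap.id ((p.1⁻¹ : GLn n) : V n →ₗ[ℝ] V n)).compr₂
        (p.1 : V n →ₗ[ℝ] V n))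

section Units

variable {R M : Type*} [Semiring R] [AddCommMonoid M] [Module R M] (a : (M →ₗ[R] M)ˣ) (x : M)

@[simp]
lemma Units.linearMap_inv_apply_apply : (↑a⁻¹ : M →ₗ[R] M) ((a : M →ₗ[R] M) x) = x := by
  rw [← Module.End.mul_apply, a.inv_mul, Module.End.one_apply]

@[simp]
lemma Units.linearMap_apply_inv_apply : (a : M →ₗ[R] M) ((↑a⁻¹ : M →ₗ[R] M) x) = x := by
  rw [← Module.End.mul_apply, a.mul_inv, Module.End.one_apply]

end Units

namespace T1nL1n

variable {n : ℕ}

@[simp]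
lemma tmul_fst (p q : GLn n × L2 n) : (tmul p q).1 = p.1 * q.1 := rfl

@[simp]
lemma tmul_snd_apply (p q : GLn n × L2 n) (u v : V n) :
    (tmul p q).2 u v = p.2 ((q.1 : V n →ₗ[ℝ] V n) u) v +
      (p.1 : V n →ₗ[ℝ] V n) (q.2 u (((p.1⁻¹ : GLn n) : V n →ₗ[ℝ] V n) v)) := rfl

lemma tmul_assoc (p q r : GLn n × L2 n) : tmul (tmul p q) r = tmul p (tmul q r) := by
  refine Prod.ext (mul_assoc _ _ _) (LinearMap.ext₂ fun u v => ?_)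
  simp [mul_inv_rev, add_assoc]

lemma one_tmul (p : GLn n × L2 n) : tmul (1, 0) p = p :=
  Prod.ext (one_mul _) (LinearMap.ext₂ fun u v => by simp)

lemma tmul_one (p : GLn n × L2 n) : tmul p (1, 0) = p :=
  Prod.ext (mul_one _) (LinearMap.ext₂ fun u v => by simp)

/-- The inverse of `(a, f)` is `(a⁻¹, -a⁻¹ ∘ f(a⁻¹, a))`. -/
noncomputable def tinv (p : GLn n × L2 n) : GLn n × L2 n :=
  (p.1⁻¹, -(p.2.compl₁₂ ((p.1⁻¹ : GLn n) : V n →ₗ[ℝ] V n) p.1).compr₂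
    ((p.1⁻¹ : GLn n) : V n →ₗ[ℝ] V n))

lemma tmul_tinv (p : GLn n × L2 n) : tmul p (tinv p) = (1, 0) :=
  Prod.ext (mul_inv_cancel _) (LinearMap.ext₂ fun u v => by simp [tinv])

lemma tinv_tmul (p : GLn n × L2 n) : tmul (tinv p) p = (1, 0) :=
  Prod.ext (inv_mul_cancel _) (LinearMap.ext₂ fun u v => by simp [tinv])

end T1nL1n

/-- `T¹ₙL¹ₙ = GL(n,ℝ) × L₂(n)` with the operation `tmul` is a group. -/
theorem T1nL1n_is_group (n : ℕ) :
    (∀ p q r : GLn n × L2 n, tmul (tmul p q) r = tmul p (tmul q r)) ∧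
    (∀ p : GLn n × L2 n, tmul ((1 : GLn n), (0 : L2 n)) p = p ∧
      tmul p ((1 : GLn n), (0 : L2 n)) = p) ∧
    (∀ p : GLn n × L2 n, ∃ q : GLn n × L2 n,
      tmul p q = ((1 : GLn n), (0 : L2 n)) ∧ tmul q p = ((1 : GLn n), (0 : L2 n))) :=
  ⟨T1nL1n.tmul_assoc, fun p => ⟨T1nL1n.one_tmul p, T1nL1n.tmul_one p⟩,
    fun p => ⟨T1nL1n.tinv p, T1nL1n.tmul_tinv p, T1nL1n.tinv_tmul p⟩⟩
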